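/- In a Costly-Guesses game, if γ < σ, then in every mixed Nash equilibrium (δ*,α*) one has δ*(E_1) = ∑_{p∈E_1}δ*(p) = 1 and α*(⟨quit⟩) = 1, i.e., the picker chooses only from the cheapest partition and the guesser makes no guess with probability one. -/

import Mathlib

open Finset

noncomputable section

variable {P : Type*} [Fintype P] [DecidableEq P] {N : ℕ}

/-- The usability cost `c(d)`: `C i` for the unique partition `E i` containing `d`. -/
def cost (E : Fin N → Finset P) (C : Fin N → ℝ) (d : P) : ℝ :=
  ∑ i, if d ∈ E i then C i else 0

/-- `pos_A(d)`: the (1-indexed) position of `d` in the list `A` if `d ∈ A`, else `|A|`. -/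
def pos (A : List P) (d : P) : ℕ :=
  if d ∈ A then A.idxOf d + 1 else A.length

/-- Picker's pure utility `u_D(d,A) = -c(d) - λ·1_{d∈A}`. -/
def puD (E : Fin N → Finset P) (C : Fin N → ℝ) (lam : ℝ) (d : P) (A : List P) : ℝ :=
  -cost E C d - lam * (if d ∈ A then 1 else 0)

/-- Guesser's pure utility `u_A(d,A) = γ·1_{d∈A} − σ·pos_A(d)`. -/
def puA (gam sig : ℝ) (d : P) (A : List P) : ℝ :=
  gam * (if d ∈ A then 1 else 0) - sig * (pos A d : ℝ)

/-- Mixed picker strategies: probability distributions on `P`. -/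
def simplexP (P : Type*) [Fintype P] : Set (P → ℝ) :=
  {δ | (∀ p, 0 ≤ δ p) ∧ ∑ p, δ p = 1}

/-- Guesser pure strategies: duplicate-free lists of secrets (the empty list is `⟨quit⟩`). -/
abbrev GStrat (P : Type*) := {A : List P // A.Nodup}

/-- Mixed guesser strategies: probability distributions on duplicate-free lists. -/
def simplexG (P : Type*) [Fintype P] [DecidableEq P] : Set (GStrat P → ℝ) :=
  {α | (∀ A, 0 ≤ α A) ∧ ∑ A, α A = 1}

/-- Picker's expected utility. -/
def UD (E : Fin N → Finset P) (C : Fin N → ℝ) (lam : ℝ)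
    (δ : P → ℝ) (α : GStrat P → ℝ) : ℝ :=
  ∑ d, ∑ A : GStrat P, δ d * α A * puD E C lam d A.1

/-- Guesser's expected utility. -/
def UA (gam sig : ℝ) (δ : P → ℝ) (α : GStrat P → ℝ) : ℝ :=
  ∑ d, ∑ A : GStrat P, δ d * α A * puA gam sig d A.1

/-- Mixed Nash equilibrium of the Costly-Guesses game. -/
def IsNE (E : Fin N → Finset P) (C : Fin N → ℝ) (lam gam sig : ℝ)
    (δ : P → ℝ) (α : GStrat P → ℝ) : Prop :=
  δ ∈ simplexP P ∧ α ∈ simplexG P ∧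
    (∀ δ' ∈ simplexP P, UD E C lam δ' α ≤ UD E C lam δ α) ∧
    (∀ α' ∈ simplexG P, UA gam sig δ α' ≤ UA gam sig δ α)

/-- Standing hypotheses of the Costly-Guesses game. -/
structure CostlyHyp (P : Type*) [Fintype P] [DecidableEq P] {N : ℕ}
    (E : Fin N → Finset P) (C : Fin N → ℝ) (lam gam sig : ℝ) : Prop where
  hN : 0 < N
  nonemp : ∀ i, (E i).Nonempty
  disj : ∀ i j, i ≠ j → Disjoint (E i) (E j)
  cover : ∀ p : P, ∃ i, p ∈ E i
  C_nonneg : 0 ≤ C ⟨0, hN⟩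
  C_mono : StrictMono C
  lam_pos : 0 < lam
  gam_pos : 0 < gam
  sig_pos : 0 < sig

/-- in a Costly-Guesses game with `γ < σ`, in every mixed NE the picker chooses
only from the cheapest partition and the guesser quits with probability one. -/
theorem costly_NE_small_gamma
    (E : Fin N → Finset P) (C : Fin N → ℝ) (lam gam sig : ℝ)
    (h : CostlyHyp P E C lam gam sig) (hgs : gam < sig)
    (δ : P → ℝ) (α : GStrat P → ℝ) (hNE : IsNE E C lam gam sig δ α) :
    ∑ p ∈ E ⟨0, h.hN⟩, δ p = 1 ∧ α ⟨[], List.nodup_nil⟩ = 1 := by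

  obtain ⟨⟨hδ0, hδ1⟩, ⟨hα0, hα1⟩, hD, hA⟩ := hNE
  set i0 : Fin N := ⟨0, h.hN⟩ with hi0
  set e0 : GStrat P := ⟨[], List.nodup_nil⟩ with he0
  -- cost of an element of E i is C i
  have costeq : ∀ {d : P} {i : Fin N}, d ∈ E i → cost E C d = C i := by
    intro d i hi
    unfold cost
    rw [Finset.sum_eq_single i]
    · simp [hi]
    · intro j _ hj
      have hd : d ∉ E j := fun hd => Finset.disjoint_left.mp (h.disj j i hj) hd hi
      simp [hd]
    · simp
  have hcost : ∀ d : P, ∃ i, d ∈ E i ∧ cost E C d = C i := by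
    intro d
    obtain ⟨i, hi⟩ := h.cover d
    exact ⟨i, hi, costeq hi⟩
  have hC0 : ∀ i : Fin N, C i0 ≤ C i := by
    intro i
    exact h.C_mono.monotone (by simp [hi0, Fin.le_def])
  ---- Guesser part ----
  -- deviation to the pure empty guess
  have hmemα' : (fun A : GStrat P => if A = e0 then (1:ℝ) else 0) ∈ simplexG P := by
    constructor
    · intro A; dsimp only; split <;> norm_num
    · simp
  have hUA' : UA gam sig δ (fun A : GStrat P => if A = e0 then (1:ℝ) else 0) = 0 := by
    unfold UA
    refine Finset.sum_eq_zero fun d _ => ?_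
    rw [Finset.sum_eq_single e0]
    · simp [puA, pos, he0]
    · intro A _ hA; simp [hA]
    · simp
  have h0le : 0 ≤ UA gam sig δ α := by
    have := hA _ hmemα'
    rw [hUA'] at this; exact this
  -- the inner sum for a nonempty list is at most gam - sig
  have hS : ∀ A : GStrat P, A ≠ e0 → ∑ d, δ d * puA gam sig d A.1 ≤ gam - sig := by
    intro A hAe
    have hne : A.1 ≠ [] := fun hnil => hAe (Subtype.ext hnil)
    have hlen : 1 ≤ (A.1.length : ℝ) := by
      exact_mod_cast List.length_pos_iff.mpr hne
    have hpt : ∀ d : P, puA gam sig d A.1 ≤ gam - sig := by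
      intro d
      unfold puA pos
      by_cases hd : d ∈ A.1
      · simp only [hd, if_true]
        have hidx : (0:ℝ) ≤ (A.1.idxOf d : ℝ) := by positivity
        push_cast
        nlinarith [h.sig_pos]
      · simp only [hd, if_false]
        nlinarith [h.sig_pos, h.gam_pos]
    calc ∑ d, δ d * puA gam sig d A.1
        ≤ ∑ d, δ d * (gam - sig) :=
          Finset.sum_le_sum fun d _ => mul_le_mul_of_nonneg_left (hpt d) (hδ0 d)
      _ = gam - sig := by rw [← Finset.sum_mul, hδ1, one_mul]
  have hSe0 : ∑ d, δ d * puA gam sig d e0.1 = 0 := by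
    refine Finset.sum_eq_zero fun d _ => ?_
    simp [puA, pos, he0]
  have hTnp : ∀ A : GStrat P, α A * (∑ d, δ d * puA gam sig d A.1) ≤ 0 := by
    intro A
    by_cases hAe : A = e0
    · rw [hAe, hSe0, mul_zero]
    · have h1 := hS A hAe
      have h2 := hα0 A
      nlinarith
  have hUAeq : UA gam sig δ α = ∑ A : GStrat P, α A * ∑ d, δ d * puA gam sig d A.1 := by
    unfold UA
    rw [Finset.sum_comm]
    refine Finset.sum_congr rfl fun A _ => ?_
    rw [Finset.mul_sum]
    exact Finset.sum_congr rfl fun d _ => by ring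
  have hsum0 : ∑ A : GStrat P, α A * ∑ d, δ d * puA gam sig d A.1 = 0 :=
    le_antisymm (Finset.sum_nonpos fun A _ => hTnp A) (by rw [← hUAeq]; exact h0le)
  have hzero := (Finset.sum_eq_zero_iff_of_nonpos (fun A _ => hTnp A)).mp hsum0
  have hαz : ∀ A : GStrat P, A ≠ e0 → α A = 0 := by
    intro A hAe
    have hz := hzero A (Finset.mem_univ A)
    have hSne : (∑ d, δ d * puA gam sig d A.1) ≠ 0 := by
      have := hS A hAe; intro hc; rw [hc] at this; linarith
    rcases mul_eq_zero.mp hz with h' | h'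
    · exact h'
    · exact absurd h' hSne
  have hαe : α e0 = 1 := by
    rw [← hα1]
    exact (Finset.sum_eq_single e0 (fun A _ hA => hαz A hA) (by simp)).symm
  ---- Picker part ----
  have hUDeq : ∀ δ' : P → ℝ, UD E C lam δ' α = ∑ d, δ' d * (-cost E C d) := by
    intro δ'
    unfold UD
    refine Finset.sum_congr rfl fun d _ => ?_
    rw [Finset.sum_eq_single e0]
    · rw [hαe]
      simp [puD, he0]
    · intro A _ hA; rw [hαz A hA]; ring
    · simp
  obtain ⟨p0, hp0⟩ := h.nonemp i0
  have hmemδ' : (fun p : P => if p = p0 then (1:ℝ) else 0) ∈ simplexP P := by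
    constructor
    · intro p; dsimp only; split <;> norm_num
    · simp
  have hUD' : UD E C lam (fun p : P => if p = p0 then (1:ℝ) else 0) α = -C i0 := by
    rw [hUDeq]
    rw [Finset.sum_eq_single p0]
    · simp [costeq hp0]
    · intro p _ hp; simp [hp]
    · simp
  have hdev : -C i0 ≤ ∑ d, δ d * (-cost E C d) := by
    have := hD _ hmemδ'
    rw [hUD', hUDeq δ] at this; exact this
  have hkey : ∑ d, δ d * (cost E C d - C i0) ≤ 0 := by
    have hrw : ∑ d, δ d * (cost E C d - C i0)
        = -(∑ d, δ d * (-cost E C d)) - C i0 := by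
      rw [← Finset.sum_neg_distrib]
      rw [show ∑ d, -(δ d * -cost E C d) = ∑ d, (δ d * (cost E C d - C i0) + δ d * C i0) from
        Finset.sum_congr rfl fun d _ => by ring] at *
      rw [Finset.sum_add_distrib, ← Finset.sum_mul, hδ1]
      ring
    rw [hrw]
    linarith
  have hnn : ∀ d ∈ (Finset.univ : Finset P), 0 ≤ δ d * (cost E C d - C i0) := by
    intro d _
    obtain ⟨i, hi, hci⟩ := hcost d
    have := hC0 i
    have := hδ0 d
    nlinarith [hci ▸ hC0 i]
  have hall0 : ∀ d ∈ (Finset.univ : Finset P), δ d * (cost E C d - C i0) = 0 := by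
    have hsum : ∑ d, δ d * (cost E C d - C i0) = 0 :=
      le_antisymm hkey (Finset.sum_nonneg hnn)
    exact (Finset.sum_eq_zero_iff_of_nonneg hnn).mp hsum
  have hδz : ∀ d : P, d ∉ E i0 → δ d = 0 := by
    intro d hd
    obtain ⟨i, hi, hci⟩ := hcost d
    have hine : i ≠ i0 := by rintro rfl; exact hd hi
    have hlt : C i0 < C i := by
      apply h.C_mono
      have hv : (i : ℕ) ≠ 0 := fun hc => hine (Fin.ext (by simp [hi0, hc]))
      rw [hi0, Fin.lt_def]
      simp only [Fin.val_mk]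
      omega
    have hz := hall0 d (Finset.mem_univ d)
    rcases mul_eq_zero.mp hz with h' | h'
    · exact h'
    · exfalso; rw [hci] at h'; linarith
  constructor
  · rw [← hδ1]
    exact Finset.sum_subset (Finset.subset_univ _) fun d _ hd => hδz d hd
  · exact hαe
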